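/- arXiv:1109.0417 — 4 statements merged into one kernel-verified Lean document; each statement's English description precedes it below -/
import Mathlib

section
/- For n ≥ 2, B_n ≤ B_{n-1} + B̃_{n+1}. -/
/-- A set partition of `Fin n`, modelled as a finite set of blocks. -/
def IsSetPartition {n : ℕ} (P : Finset (Finset (Fin n))) : Prop :=
  (∀ b ∈ P, b.Nonempty) ∧ (∀ b ∈ P, ∀ c ∈ P, b ≠ c → Disjoint b c) ∧
    P.sup id = Finset.univ

/-- The `n`-th Bell number: the number of set partitions of an `n`-element set. -/
noncomputable def bell (n : ℕ) : ℕ :=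
  Set.ncard {P : Finset (Finset (Fin n)) | IsSetPartition P}

/-- The number of singleton-free set partitions of an `n`-element set. -/
noncomputable def bellT (n : ℕ) : ℕ :=
  Set.ncard {P : Finset (Finset (Fin n)) | IsSetPartition P ∧ ∀ b ∈ P, 2 ≤ b.card}

/-!
Split the set partitions of `Fin (n + 1)` according to whether `{Fin.last n}` is a block.
Those where it is are the set partitions of `Fin n` with that block added. Each of the others
is sent injectively to a singleton-free set partition of `Fin (n + 2)`: if it has no singleton
block, the new point joins the block of `Fin.last n`; otherwise all singleton blocks are merged
into one block together with the new point. Since `{Fin.last n}` is not a block, the new point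
shares its block with `Fin.last n` exactly in the first case, so the map can be inverted.
-/

open Finset

namespace IsSetPartition

variable {n : ℕ} {P : Finset (Finset (Fin n))} {b c : Finset (Fin n)} {x : Fin n}

theorem of_existsUnique (hne : ∀ b ∈ P, b.Nonempty) (hmem : ∀ x, ∃ b ∈ P, x ∈ b)
    (huniq : ∀ b ∈ P, ∀ c ∈ P, ∀ x ∈ b, x ∈ c → b = c) : IsSetPartition P := by
  refine ⟨hne, fun b hb c hc hbc => disjoint_left.2 fun x hxb hxc => hbc ?_, ?_⟩
  · exact huniq b hb c hc x hxb hxc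
  · refine eq_univ_of_forall fun x => ?_
    obtain ⟨b, hb, hx⟩ := hmem x
    exact mem_sup.2 ⟨b, hb, hx⟩

theorem exists_mem (hP : IsSetPartition P) (x : Fin n) : ∃ b ∈ P, x ∈ b := by
  simpa using hP.2.2.ge (mem_univ x)

theorem eq_of_mem_of_mem (hP : IsSetPartition P) (hb : b ∈ P) (hc : c ∈ P) (hxb : x ∈ b)
    (hxc : x ∈ c) : b = c := by
  by_contra hbc
  exact disjoint_left.1 (hP.2.1 b hb c hc hbc) hxb hxc

theorem singleton_mem_iff_card_lt_two (hP : IsSetPartition P) (hb : b ∈ P) (hx : x ∈ b) :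
    {x} ∈ P ↔ b.card < 2 := by
  constructor
  · intro hxP
    rw [hP.eq_of_mem_of_mem hb hxP hx (mem_singleton_self x), card_singleton]
    omega
  · intro hcard
    rwa [← eq_singleton_iff_unique_mem.2 ⟨hx, fun y hy => card_le_one.1 (by omega) y hy x hx⟩]

end IsSetPartition

namespace SetPartition

variable {n : ℕ}

noncomputable def restrictBlock (c : Finset (Fin (n + 1))) : Finset (Fin n) :=
  c.preimage Fin.castSucc (Fin.castSucc_injective n).injOn

@[simp]
theorem mem_restrictBlock {c : Finset (Fin (n + 1))} {x : Fin n} :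
    x ∈ restrictBlock c ↔ x.castSucc ∈ c :=
  mem_preimage

@[simp]
theorem restrictBlock_singleton_last : restrictBlock {Fin.last n} = ∅ := by
  ext; simp [Fin.castSucc_ne_last]

theorem map_restrictBlock {c : Finset (Fin (n + 1))} (hc : Fin.last n ∉ c) :
    (restrictBlock c).map Fin.castSuccEmb = c := by
  ext x
  induction x using Fin.lastCases <;> simp [hc]

def extendBlock (B b : Finset (Fin n)) : Finset (Fin (n + 1)) :=
  if b = B then insert (Fin.last n) (b.map Fin.castSuccEmb) else b.map Fin.castSuccEmb

@[simp]
theorem castSucc_mem_extendBlock {B b : Finset (Fin n)} {x : Fin n} :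
    x.castSucc ∈ extendBlock B b ↔ x ∈ b := by
  unfold extendBlock; split_ifs <;> simp [Fin.castSucc_ne_last]

@[simp]
theorem last_mem_extendBlock {B b : Finset (Fin n)} :
    Fin.last n ∈ extendBlock B b ↔ b = B := by
  unfold extendBlock; split_ifs <;> simp [*, Fin.castSucc_ne_last]

@[simp]
theorem restrictBlock_extendBlock (B b : Finset (Fin n)) :
    restrictBlock (extendBlock B b) = b := by
  ext; simp

theorem card_le_card_extendBlock (B b : Finset (Fin n)) : b.card ≤ (extendBlock B b).card := by
  unfold extendBlock; split_ifs
  · exact (card_map _).ge.trans (card_le_card (subset_insert _ _))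
  · exact (card_map _).ge

theorem card_extendBlock_self (B : Finset (Fin n)) : (extendBlock B B).card = B.card + 1 := by
  simp [extendBlock, Fin.castSucc_ne_last]

noncomputable def restrictLast (P : Finset (Finset (Fin (n + 1)))) : Finset (Finset (Fin n)) :=
  (P.image restrictBlock).erase ∅

def addSingletonLast (P : Finset (Finset (Fin n))) : Finset (Finset (Fin (n + 1))) :=
  insert {Fin.last n} (P.image (·.map Fin.castSuccEmb))

def insertLast (P : Finset (Finset (Fin n))) (B : Finset (Fin n)) :
    Finset (Finset (Fin (n + 1))) :=
  P.image (extendBlock B)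

theorem restrictLast_insertLast {P : Finset (Finset (Fin n))} (hP : ∀ b ∈ P, b.Nonempty)
    (B : Finset (Fin n)) : restrictLast (insertLast P B) = P := by
  rw [restrictLast, insertLast, image_image]
  simp only [Function.comp_def, restrictBlock_extendBlock, image_id']
  exact erase_eq_of_notMem fun h => not_nonempty_empty (hP ∅ h)

theorem two_le_card_of_mem_insertLast {P : Finset (Finset (Fin n))} {B : Finset (Fin n)}
    (hcard : ∀ b ∈ P, b ≠ B → 2 ≤ b.card) (hB : B.Nonempty) :
    ∀ c ∈ insertLast P B, 2 ≤ c.card := by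
  simp only [insertLast, mem_image, forall_exists_index, and_imp, forall_apply_eq_imp_iff₂]
  intro b hb
  by_cases hbB : b = B
  · rw [hbB, card_extendBlock_self]
    have := hB.card_pos
    omega
  · exact (hcard b hb hbB).trans (card_le_card_extendBlock B b)

def blockOf (P : Finset (Finset (Fin n))) (x : Fin n) : Finset (Fin n) :=
  (P.filter (x ∈ ·)).sup id

def singletonPoints (P : Finset (Finset (Fin n))) : Finset (Fin n) :=
  univ.filter fun x => {x} ∈ P

@[simp]
theorem mem_singletonPoints {P : Finset (Finset (Fin n))} {x : Fin n} :
    x ∈ singletonPoints P ↔ {x} ∈ P := by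
  simp [singletonPoints]

def mergeSingletons (P : Finset (Finset (Fin n))) : Finset (Finset (Fin n)) :=
  insert (singletonPoints P) (P.filter fun b => 2 ≤ b.card)

def splitBlock (P : Finset (Finset (Fin n))) (C : Finset (Fin n)) : Finset (Finset (Fin n)) :=
  P.erase C ∪ C.image ({·})

noncomputable def toSingletonFree (P : Finset (Finset (Fin (n + 1)))) :
    Finset (Finset (Fin (n + 2))) :=
  if ∀ b ∈ P, 2 ≤ b.card then insertLast P (blockOf P (Fin.last n))
  else insertLast (mergeSingletons P) (singletonPoints P)

noncomputable def ofSingletonFree (Q : Finset (Finset (Fin (n + 2)))) :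
    Finset (Finset (Fin (n + 1))) :=
  if Fin.last n ∈ restrictBlock (blockOf Q (Fin.last (n + 1))) then restrictLast Q
  else splitBlock (restrictLast Q) (restrictBlock (blockOf Q (Fin.last (n + 1))))

end SetPartition

namespace IsSetPartition

open SetPartition

variable {n : ℕ}

theorem addSingletonLast_restrictLast {P : Finset (Finset (Fin (n + 1)))}
    (hP : IsSetPartition P) (hlast : {Fin.last n} ∈ P) :
    addSingletonLast (SetPartition.restrictLast P) = P := by
  have last_notMem : ∀ c ∈ P, c ≠ {Fin.last n} → Fin.last n ∉ c := fun c hc hne hlc =>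
    hne (hP.eq_of_mem_of_mem hc hlast hlc (mem_singleton_self _))
  ext c
  simp only [addSingletonLast, SetPartition.restrictLast, mem_insert, mem_image, mem_erase]
  constructor
  · rintro (rfl | ⟨_, ⟨hne, d, hd, rfl⟩, rfl⟩)
    · exact hlast
    · have hd' : d ≠ {Fin.last n} := by rintro rfl; exact hne restrictBlock_singleton_last
      rwa [map_restrictBlock (last_notMem d hd hd')]
  · intro hc
    by_cases hc' : c = {Fin.last n}
    · exact .inl hc'
    · have hmap := map_restrictBlock (last_notMem c hc hc')
      refine .inr ⟨restrictBlock c, ⟨fun h => ?_, c, hc, rfl⟩, hmap⟩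
      rw [h, map_empty] at hmap
      exact (hP.1 c hc).ne_empty hmap.symm

theorem restrictLast {P : Finset (Finset (Fin (n + 1)))} (hP : IsSetPartition P) :
    IsSetPartition (restrictLast P) := by
  refine .of_existsUnique (fun b hb => nonempty_iff_ne_empty.2 (ne_of_mem_erase hb))
    (fun x => ?_) ?_
  · obtain ⟨c, hc, hx⟩ := hP.exists_mem x.castSucc
    exact ⟨restrictBlock c, mem_erase.2 ⟨ne_empty_of_mem (mem_restrictBlock.2 hx),
      mem_image_of_mem _ hc⟩, mem_restrictBlock.2 hx⟩
  · simp only [SetPartition.restrictLast, mem_erase, mem_image]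
    rintro _ ⟨-, c, hc, rfl⟩ _ ⟨-, d, hd, rfl⟩ x hxc hxd
    rw [hP.eq_of_mem_of_mem hc hd (mem_restrictBlock.1 hxc) (mem_restrictBlock.1 hxd)]

theorem insertLast {P : Finset (Finset (Fin n))} {B : Finset (Fin n)} (hP : IsSetPartition P)
    (hB : B ∈ P) : IsSetPartition (insertLast P B) := by
  refine .of_existsUnique ?_ (fun x => ?_) ?_
  · simp only [SetPartition.insertLast, mem_image, forall_exists_index, and_imp,
      forall_apply_eq_imp_iff₂]
    intro b hb
    obtain ⟨x, hx⟩ := hP.1 b hb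
    exact ⟨x.castSucc, castSucc_mem_extendBlock.2 hx⟩
  · simp only [SetPartition.insertLast, exists_mem_image]
    induction x using Fin.lastCases with
    | last => exact ⟨B, hB, last_mem_extendBlock.2 rfl⟩
    | cast y => simpa using hP.exists_mem y
  · simp only [SetPartition.insertLast, mem_image, forall_exists_index, and_imp,
      forall_apply_eq_imp_iff₂]
    intro b hb c hc x hxb hxc
    induction x using Fin.lastCases with
    | last => rw [last_mem_extendBlock.1 hxb, last_mem_extendBlock.1 hxc]
    | cast y =>
      rw [hP.eq_of_mem_of_mem hb hc (castSucc_mem_extendBlock.1 hxb)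
        (castSucc_mem_extendBlock.1 hxc)]

theorem blockOf_eq {P : Finset (Finset (Fin n))} {b : Finset (Fin n)} {x : Fin n}
    (hP : IsSetPartition P) (hb : b ∈ P) (hx : x ∈ b) : blockOf P x = b := by
  have : P.filter (x ∈ ·) = {b} :=
    eq_singleton_iff_unique_mem.2 ⟨mem_filter.2 ⟨hb, hx⟩,
      fun c hc => hP.eq_of_mem_of_mem (mem_filter.1 hc).1 hb (mem_filter.1 hc).2 hx⟩
  rw [blockOf, this, sup_singleton, id]

theorem blockOf_mem {P : Finset (Finset (Fin n))} (hP : IsSetPartition P) (x : Fin n) :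
    blockOf P x ∈ P := by
  obtain ⟨b, hb, hx⟩ := hP.exists_mem x
  rwa [hP.blockOf_eq hb hx]

theorem mem_blockOf {P : Finset (Finset (Fin n))} (hP : IsSetPartition P) (x : Fin n) :
    x ∈ blockOf P x := by
  obtain ⟨b, hb, hx⟩ := hP.exists_mem x
  rwa [hP.blockOf_eq hb hx]

theorem singletonPoints_nonempty {P : Finset (Finset (Fin n))} (hP : IsSetPartition P)
    (h : ¬ ∀ b ∈ P, 2 ≤ b.card) :
    (singletonPoints P).Nonempty := by
  simp only [not_forall, not_le, exists_prop] at h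
  obtain ⟨b, hb, hcard⟩ := h
  obtain ⟨x, hx⟩ := hP.1 b hb
  exact ⟨x, mem_singletonPoints.2 ((hP.singleton_mem_iff_card_lt_two hb hx).2 hcard)⟩

theorem singletonPoints_ne {P : Finset (Finset (Fin n))} {b : Finset (Fin n)}
    (hP : IsSetPartition P) (hS : (singletonPoints P).Nonempty) (hb : b ∈ P)
    (hcard : 2 ≤ b.card) :
    singletonPoints P ≠ b := by
  rintro rfl
  obtain ⟨x, hx⟩ := hS
  have := (hP.singleton_mem_iff_card_lt_two hb hx).1 (mem_singletonPoints.1 hx)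
  omega

theorem mergeSingletons {P : Finset (Finset (Fin n))} (hP : IsSetPartition P)
    (hS : (singletonPoints P).Nonempty) :
    IsSetPartition (SetPartition.mergeSingletons P) := by
  have eq_of_mem : ∀ c ∈ SetPartition.mergeSingletons P, ∀ x ∈ c,
      c = if {x} ∈ P then singletonPoints P else blockOf P x := by
    simp only [SetPartition.mergeSingletons, forall_mem_insert, mem_filter, and_imp]
    refine ⟨fun x hx => (if_pos (mem_singletonPoints.1 hx)).symm, fun c hc hcard x hx => ?_⟩
    rw [if_neg fun h => by have := (hP.singleton_mem_iff_card_lt_two hc hx).1 h; omega,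
      hP.blockOf_eq hc hx]
  refine .of_existsUnique ?_ (fun x => ?_) ?_
  · simp only [SetPartition.mergeSingletons, forall_mem_insert, mem_filter, and_imp]
    exact ⟨hS, fun b hb _ => hP.1 b hb⟩
  · obtain ⟨b, hb, hx⟩ := hP.exists_mem x
    by_cases hcard : 2 ≤ b.card
    · exact ⟨b, mem_insert_of_mem (mem_filter.2 ⟨hb, hcard⟩), hx⟩
    · refine ⟨singletonPoints P, mem_insert_self _ _, ?_⟩
      exact mem_singletonPoints.2 ((hP.singleton_mem_iff_card_lt_two hb hx).2 (by omega))
  · exact fun b hb c hc x hxb hxc => (eq_of_mem b hb x hxb).trans (eq_of_mem c hc x hxc).symm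

theorem splitBlock_mergeSingletons {P : Finset (Finset (Fin n))} (hP : IsSetPartition P)
    (hS : (singletonPoints P).Nonempty) :
    splitBlock (SetPartition.mergeSingletons P) (singletonPoints P) = P := by
  rw [splitBlock, SetPartition.mergeSingletons, erase_insert fun h =>
    hP.singletonPoints_ne hS (mem_filter.1 h).1 (mem_filter.1 h).2 rfl]
  ext b
  simp only [mem_union, mem_filter, mem_image, mem_singletonPoints]
  constructor
  · rintro (⟨hb, -⟩ | ⟨x, hx, rfl⟩) <;> assumption
  · intro hb
    by_cases hcard : 2 ≤ b.card
    · exact .inl ⟨hb, hcard⟩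
    · obtain ⟨x, hx⟩ := hP.1 b hb
      have := (hP.singleton_mem_iff_card_lt_two hb hx).2 (by omega)
      exact .inr ⟨x, this, (hP.eq_of_mem_of_mem hb this hx (mem_singleton_self x)).symm⟩

theorem ofSingletonFree_insertLast {P : Finset (Finset (Fin (n + 1)))} {B : Finset (Fin (n + 1))}
    (hP : IsSetPartition P) (hB : B ∈ P) :
    ofSingletonFree (SetPartition.insertLast P B) =
      if Fin.last n ∈ B then P else splitBlock P B := by
  have : blockOf (SetPartition.insertLast P B) (Fin.last (n + 1)) = extendBlock B B :=
    (hP.insertLast hB).blockOf_eq (mem_image_of_mem _ hB) (last_mem_extendBlock.2 rfl)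
  rw [ofSingletonFree, this, restrictBlock_extendBlock, restrictLast_insertLast hP.1]

theorem ofSingletonFree_toSingletonFree {P : Finset (Finset (Fin (n + 1)))}
    (hP : IsSetPartition P) (hlast : {Fin.last n} ∉ P) :
    ofSingletonFree (toSingletonFree P) = P := by
  unfold toSingletonFree
  split_ifs with hcard
  · rw [ofSingletonFree_insertLast hP (hP.blockOf_mem _), if_pos (hP.mem_blockOf _)]
  · have hS := hP.singletonPoints_nonempty hcard
    rw [ofSingletonFree_insertLast (hP.mergeSingletons hS) (mem_insert_self _ _),
      if_neg (by simpa using hlast), hP.splitBlock_mergeSingletons hS]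

theorem toSingletonFree {P : Finset (Finset (Fin (n + 1)))} (hP : IsSetPartition P) :
    IsSetPartition (toSingletonFree P) ∧ ∀ c ∈ toSingletonFree P, 2 ≤ c.card := by
  unfold SetPartition.toSingletonFree
  split_ifs with hcard
  · exact ⟨hP.insertLast (hP.blockOf_mem _), two_le_card_of_mem_insertLast
      (fun b hb _ => hcard b hb) ⟨_, hP.mem_blockOf _⟩⟩
  · have hS := hP.singletonPoints_nonempty hcard
    refine ⟨(hP.mergeSingletons hS).insertLast (mem_insert_self _ _),
      two_le_card_of_mem_insertLast (fun b hb hne => ?_) hS⟩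
    exact (mem_filter.1 ((mem_insert.1 hb).resolve_left hne)).2

end IsSetPartition

open SetPartition

theorem ncard_setOf_isSetPartition_singleton_last_mem_le (n : ℕ) :
    {P : Finset (Finset (Fin (n + 1))) | IsSetPartition P ∧ {Fin.last n} ∈ P}.ncard ≤
      bell n :=
  Set.ncard_le_ncard_of_injOn restrictLast (fun _ hP => hP.1.restrictLast)
    (Set.LeftInvOn.injOn (f₁' := addSingletonLast) fun _ hP =>
      hP.1.addSingletonLast_restrictLast hP.2)

theorem ncard_setOf_isSetPartition_singleton_last_notMem_le (n : ℕ) :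
    {P : Finset (Finset (Fin (n + 1))) | IsSetPartition P ∧ {Fin.last n} ∉ P}.ncard ≤
      bellT (n + 2) :=
  Set.ncard_le_ncard_of_injOn toSingletonFree (fun _ hP => hP.1.toSingletonFree)
    (Set.LeftInvOn.injOn (f₁' := ofSingletonFree) fun _ hP =>
      hP.1.ofSingletonFree_toSingletonFree hP.2)

theorem bell_le_bell_add_bellT_general (n : ℕ) :
    bell n ≤ bell (n - 1) + bellT (n + 1) := by
  cases n with
  | zero => exact Nat.le_add_right _ _ -- `0 - 1 = 0` in `ℕ`
  | succ n =>
    have hsplit : {P : Finset (Finset (Fin (n + 1))) | IsSetPartition P} =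
        {P | IsSetPartition P ∧ {Fin.last n} ∈ P} ∪
          {P | IsSetPartition P ∧ {Fin.last n} ∉ P} := by
      ext P
      simp only [Set.mem_ofPred_eq, Set.mem_union, ← and_or_left, em, and_true]
    calc bell (n + 1) ≤ _ := by rw [bell, hsplit]; exact Set.ncard_union_le _ _
      _ ≤ bell n + bellT (n + 2) := add_le_add
          (ncard_setOf_isSetPartition_singleton_last_mem_le n)
          (ncard_setOf_isSetPartition_singleton_last_notMem_le n)

theorem bell_le_bell_add_bellT (n : ℕ) (hn : 2 ≤ n) :
    bell n ≤ bell (n - 1) + bellT (n + 1) :=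
  bell_le_bell_add_bellT_general n
end

section
/- For every fixed positive integer c and fixed positive integer t, there exists N such that for all n ≥ N, c · B_{n-t-1} < B_{n-t} − B̃_{n-t} − B̃_{n-t-1}. -/
/-
Shattering the block of the new point of a singleton-free partition of `[m+1]` into singletons
injectively produces a partition of `[m]` having a singleton block; hence
`B̃_{m+1} + B̃_m ≤ B_m`.

A partition of `[m]` with `k` blocks extends in `k + 1` ways to a partition of `[m+1]`, and at
most `K^m` partitions of `[m]` have at most `K` blocks (they are kernels of maps `[m] → [K]`).
Since `k^j ≤ B_{k+j}` (kernels of maps `[k] ⊕ [j] → [k]` that are the identity on `[k]`),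
eventually `B_m ≥ 2 (2c)^m`; then at least half of the partitions of `[m]` have more than `2c`
blocks, and `B_{m+1} ≥ c B_m`. Applied with `c + 2`, this gives
`B_{m+1} - B̃_{m+1} - B̃_m ≥ B_{m+1} - B_m > c B_m`.
-/

open Finset Filter

namespace Finpartition

variable {α β : Type*} [Fintype α] [DecidableEq α]

lemma parts_eq_image_part (F : Finpartition (univ : Finset α)) : F.parts = univ.image F.part := by
  ext t
  refine ⟨fun ht => ?_, ?_⟩
  · obtain ⟨a, ha⟩ := F.nonempty_of_mem_parts ht
    exact mem_image.2 ⟨a, mem_univ a, F.part_eq_of_mem ht ha⟩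
  · intro ht
    obtain ⟨a, -, rfl⟩ := mem_image.1 ht
    exact F.part_mem.2 (mem_univ a)

lemma ext_part {F G : Finpartition (univ : Finset α)} (h : ∀ a, F.part a = G.part a) :
    F = G := by
  ext1
  rw [parts_eq_image_part, parts_eq_image_part, funext h]

lemma mem_part_comm (F : Finpartition (univ : Finset α)) {a b : α} :
    a ∈ F.part b ↔ b ∈ F.part a := by
  rw [F.mem_part_iff_part_eq_part (mem_univ a) (mem_univ b),
    F.mem_part_iff_part_eq_part (mem_univ b) (mem_univ a), eq_comm]

lemma part_eq_iff_mem_of_mem_insert_empty (F : Finpartition (univ : Finset α)) {t : Finset α}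
    (ht : t ∈ insert ∅ F.parts) {a : α} : F.part a = t ↔ a ∈ t := by
  rcases mem_insert.1 ht with rfl | ht
  · simp
  · exact F.part_eq_iff_mem ht

section ker
variable [DecidableEq β]

def ker (f : α → β) : Finpartition (univ : Finset α) :=
  ofSetoid (Setoid.ker f)

lemma mem_part_ker {f : α → β} {a b : α} : b ∈ (ker f).part a ↔ f a = f b :=
  mem_part_ofSetoid_iff_rel

lemma ker_eq_ker_iff {γ : Type*} [DecidableEq γ] {f : α → β} {g : α → γ} :
    ker f = ker g ↔ ∀ a b, f a = f b ↔ g a = g b := by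
  refine ⟨fun h a b => ?_, fun h => ext_part fun a => ?_⟩
  · rw [← mem_part_ker, h, mem_part_ker]
  · ext b; rw [mem_part_ker, mem_part_ker, h]

lemma ker_part (F : Finpartition (univ : Finset α)) : ker F.part = F := by
  refine ext_part fun a => ?_
  ext b
  rw [mem_part_ker, eq_comm, ← F.mem_part_iff_part_eq_part (mem_univ b) (mem_univ a)]

end ker

lemma card_filter_card_parts_le_le_pow (K : ℕ) :
    #{F : Finpartition (univ : Finset α) | #F.parts ≤ K} ≤ K ^ Fintype.card α := by
  calc #{F : Finpartition (univ : Finset α) | #F.parts ≤ K}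
      ≤ #(univ : Finset (α → Fin K)) := card_le_card_of_surjOn ker fun F hF => ?_
    _ = K ^ Fintype.card α := by simp
  obtain ⟨ι⟩ : Nonempty (F.parts ↪ Fin K) :=
    Function.Embedding.nonempty_of_card_le (by simpa using (mem_filter.1 hF).2)
  refine ⟨fun a => ι ⟨F.part a, F.part_mem.2 (mem_univ a)⟩, mem_coe.2 (mem_univ _), ?_⟩
  conv_rhs => rw [← ker_part F]
  exact ker_eq_ker_iff.2 fun a b => by simp [ι.injective.eq_iff]

lemma pow_card_le_card_sum [Fintype β] [DecidableEq β] :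
    Fintype.card β ^ Fintype.card α ≤
      Fintype.card (Finpartition (univ : Finset (β ⊕ α))) := by
  rw [← Fintype.card_fun]
  refine Fintype.card_le_of_injective (fun f => ker (Sum.elim id f)) fun f g h => funext fun a => ?_
  simpa using ((ker_eq_ker_iff.1 h (.inr a) (.inl (f a))).1 rfl).symm

section extendNone

-- `t = ∅` puts `none` into a new singleton block; `t ∈ F.parts` adds `none` to the block `t`.
def extendNone (F : Finpartition (univ : Finset α)) (t : Finset α) :
    Finpartition (univ : Finset (Option α)) :=
  ker (·.elim t F.part)

lemma eq_and_eq_of_extendNone_eq {F G : Finpartition (univ : Finset α)} {s t : Finset α}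
    (hs : s ∈ insert ∅ F.parts) (ht : t ∈ insert ∅ G.parts)
    (h : extendNone F s = extendNone G t) :
    F = G ∧ s = t := by
  have hker := ker_eq_ker_iff.1 h
  refine ⟨ext_part fun a => ?_, ?_⟩
  · ext b
    simpa [F.mem_part_iff_part_eq_part, G.mem_part_iff_part_eq_part, eq_comm]
      using hker (some a) (some b)
  · ext a
    rw [← F.part_eq_iff_mem_of_mem_insert_empty hs, ← G.part_eq_iff_mem_of_mem_insert_empty ht]
    simpa [eq_comm] using hker none (some a)

lemma sum_card_parts_add_one_le :
    ∑ F : Finpartition (univ : Finset α), (#F.parts + 1) ≤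
      Fintype.card (Finpartition (univ : Finset (Option α))) := by
  calc ∑ F : Finpartition (univ : Finset α), (#F.parts + 1)
      = #(univ.sigma fun F : Finpartition (univ : Finset α) => insert ∅ F.parts) := by
        rw [card_sigma]
        exact sum_congr rfl fun F _ => (card_insert_of_notMem F.empty_notMem_parts).symm
    _ ≤ #(univ : Finset (Finpartition (univ : Finset (Option α)))) :=
        card_le_card_of_injOn (fun x => extendNone x.1 x.2) (fun _ _ => mem_coe.2 (mem_univ _))
          fun x hx y hy h => by
            obtain ⟨hF, hs⟩ :=
              eq_and_eq_of_extendNone_eq (mem_sigma.1 hx).2 (mem_sigma.1 hy).2 h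
            exact Sigma.ext hF (heq_of_eq hs)

end extendNone

lemma mul_card_filter_lt_card_parts_le (K : ℕ) :
    (K + 1) * #{F : Finpartition (univ : Finset α) | K < #F.parts} ≤
      Fintype.card (Finpartition (univ : Finset (Option α))) :=
  calc (K + 1) * #{F : Finpartition (univ : Finset α) | K < #F.parts}
      = ∑ F ∈ {F : Finpartition (univ : Finset α) | K < #F.parts}, (K + 1) := by
        rw [sum_const, smul_eq_mul, mul_comm]
    _ ≤ ∑ F ∈ {F : Finpartition (univ : Finset α) | K < #F.parts}, (#F.parts + 1) :=
        sum_le_sum fun F hF => by have := (mem_filter.1 hF).2; omega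
    _ ≤ ∑ F : Finpartition (univ : Finset α), (#F.parts + 1) :=
        sum_le_sum_of_subset (filter_subset _ _)
    _ ≤ Fintype.card (Finpartition (univ : Finset (Option α))) := sum_card_parts_add_one_le

lemma mul_card_le_card_option {c : ℕ}
    (h : 2 * (2 * c) ^ Fintype.card α ≤ Fintype.card (Finpartition (univ : Finset α))) :
    c * Fintype.card (Finpartition (univ : Finset α)) ≤
      Fintype.card (Finpartition (univ : Finset (Option α))) := by
  set B := Fintype.card (Finpartition (univ : Finset α))
  set S := #{F : Finpartition (univ : Finset α) | 2 * c < #F.parts}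
  have hsplit : B ≤ (2 * c) ^ Fintype.card α + S := by
    have := card_filter_add_card_filter_not (s := univ)
      (fun F : Finpartition (univ : Finset α) => #F.parts ≤ 2 * c)
    simp only [not_le, card_univ] at this
    have := card_filter_card_parts_le_le_pow (α := α) (2 * c)
    omega
  calc c * B ≤ c * (2 * S) := Nat.mul_le_mul_left c (by omega)
    _ ≤ (2 * c + 1) * S := by rw [← mul_assoc]; exact Nat.mul_le_mul_right S (by omega)
    _ ≤ _ := mul_card_filter_lt_card_parts_le (2 * c)

section breakNone

variable {Q R : Finpartition (univ : Finset (Option α))} {a : α}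

-- The block of `none` is shattered into singletons (keys `Sum.inl a`); the other blocks are kept.
def breakNone (Q : Finpartition (univ : Finset (Option α))) : Finpartition (univ : Finset α) :=
  ker fun a => if none ∈ Q.part (some a) then Sum.inl a else Sum.inr (Q.part (some a))

lemma part_breakNone_of_mem (h : none ∈ Q.part (some a)) : (breakNone Q).part a = {a} := by
  ext b
  by_cases hb : none ∈ Q.part (some b)
  · simp [breakNone, mem_part_ker, h, hb, eq_comm]
  · have hba : b ≠ a := by rintro rfl; exact hb h
    simp [breakNone, mem_part_ker, h, hb, hba]

lemma map_part_breakNone_of_notMem (h : none ∉ Q.part (some a)) :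
    ((breakNone Q).part a).map .some = Q.part (some a) := by
  ext (_ | b)
  · simpa using h
  · have hsame : some b ∈ Q.part (some a) ↔ Q.part (some b) = Q.part (some a) :=
      Q.mem_part_iff_part_eq_part (mem_univ _) (mem_univ _)
    by_cases hb : none ∈ Q.part (some b)
    · have : some b ∉ Q.part (some a) := fun hba => h (hsame.1 hba ▸ hb)
      simp [breakNone, mem_part_ker, h, hb, this]
    · simp [breakNone, mem_part_ker, h, hb, hsame, eq_comm]

lemma part_breakNone_eq_singleton_iff (hQ : ∀ t ∈ Q.parts, 2 ≤ #t) :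
    (breakNone Q).part a = {a} ↔ none ∈ Q.part (some a) := by
  refine ⟨fun h => ?_, part_breakNone_of_mem⟩
  by_contra hn
  have := hQ _ (Q.part_mem.2 (mem_univ (some a)))
  rw [← map_part_breakNone_of_notMem hn, h] at this
  simp at this

lemma exists_mem_parts_breakNone_card_eq_one (hQ : ∀ t ∈ Q.parts, 2 ≤ #t) :
    ∃ t ∈ (breakNone Q).parts, #t = 1 := by
  obtain ⟨x, hx, hxn⟩ := exists_mem_ne (hQ _ (Q.part_mem.2 (mem_univ none))) none
  obtain ⟨a, rfl⟩ := Option.ne_none_iff_exists'.1 hxn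
  refine ⟨{a}, ?_, card_singleton a⟩
  rw [← part_breakNone_of_mem (Q.mem_part_comm.1 hx)]
  exact (breakNone Q).part_mem.2 (mem_univ a)

lemma eq_of_breakNone_eq (hQ : ∀ t ∈ Q.parts, 2 ≤ #t) (hR : ∀ t ∈ R.parts, 2 ≤ #t)
    (h : breakNone Q = breakNone R) : Q = R := by
  have hN (a : α) : none ∈ Q.part (some a) ↔ none ∈ R.part (some a) := by
    rw [← part_breakNone_eq_singleton_iff hQ, ← part_breakNone_eq_singleton_iff hR, h]
  have hnone : Q.part none = R.part none := by
    ext (_ | b)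
    · simp
    · rw [Q.mem_part_comm, R.mem_part_comm, hN]
  refine ext_part fun
    | none => hnone
    | some a => ?_
  by_cases ha : none ∈ Q.part (some a)
  · rw [Q.part_eq_of_mem (Q.part_mem.2 (mem_univ none)) (Q.mem_part_comm.1 ha),
      R.part_eq_of_mem (R.part_mem.2 (mem_univ none)) (R.mem_part_comm.1 ((hN a).1 ha)), hnone]
  · rw [← map_part_breakNone_of_notMem ha, ← map_part_breakNone_of_notMem (mt (hN a).2 ha), h]

lemma card_filter_two_le_option_add_le :
    #{Q : Finpartition (univ : Finset (Option α)) | ∀ t ∈ Q.parts, 2 ≤ #t} +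
        #{F : Finpartition (univ : Finset α) | ∀ t ∈ F.parts, 2 ≤ #t} ≤
      Fintype.card (Finpartition (univ : Finset α)) := by
  have hbreak : #{Q : Finpartition (univ : Finset (Option α)) | ∀ t ∈ Q.parts, 2 ≤ #t} ≤
      #{F : Finpartition (univ : Finset α) | ¬∀ t ∈ F.parts, 2 ≤ #t} := by
    refine card_le_card_of_injOn breakNone (fun Q hQ => ?_)
      fun Q hQ R hR h => eq_of_breakNone_eq (mem_filter.1 hQ).2 (mem_filter.1 hR).2 h
    obtain ⟨t, ht, ht1⟩ := exists_mem_parts_breakNone_card_eq_one (mem_filter.1 hQ).2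
    exact mem_filter.2 ⟨mem_univ _, fun h => by have := h t ht; omega⟩
  have hsplit := card_filter_add_card_filter_not (s := univ)
    (fun F : Finpartition (univ : Finset α) => ∀ t ∈ F.parts, 2 ≤ #t)
  rw [card_univ] at hsplit
  omega

end breakNone

section univCongr
variable [Fintype β] [DecidableEq β]

def univCongr (e : α ≃ β) :
    Finpartition (univ : Finset α) ≃ Finpartition (univ : Finset β) where
  toFun F := (F.map (⟨e.finsetCongr, by simp⟩ : Finset α ≃o Finset β)).copy (by simp)
  invFun G := (G.map (⟨e.symm.finsetCongr, by simp⟩ : Finset β ≃o Finset α)).copy (by simp)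
  left_inv F := by ext1; ext t; simp [copy, Finset.map_map]
  right_inv G := by ext1; ext t; simp [copy, Finset.map_map]

lemma parts_univCongr (e : α ≃ β) (F : Finpartition (univ : Finset α)) :
    (univCongr e F).parts = F.parts.map e.finsetCongr.toEmbedding := rfl

end univCongr

end Finpartition

lemma isSetPartition_iff {n : ℕ} {P : Finset (Finset (Fin n))} :
    IsSetPartition P ↔ ∃ F : Finpartition (univ : Finset (Fin n)), F.parts = P := by
  refine ⟨fun ⟨hne, hdisj, hsup⟩ => ?_, ?_⟩
  · refine ⟨⟨P, supIndep_iff_pairwiseDisjoint.2 hdisj, hsup, fun h => ?_⟩, rfl⟩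
    exact (hne ⊥ h).ne_empty rfl
  · rintro ⟨F, rfl⟩
    exact ⟨fun _ => F.nonempty_of_mem_parts, fun _ hb _ hc => F.disjoint hb hc, F.sup_parts⟩

section bellCard

variable {α : Type*} [Fintype α] [DecidableEq α]

lemma bell_eq_card {n : ℕ} (e : Fin n ≃ α) :
    bell n = Fintype.card (Finpartition (univ : Finset α)) := by
  have : {P | IsSetPartition P} = Set.range (Finpartition.parts (a := (univ : Finset (Fin n)))) :=
    Set.ext fun _ => isSetPartition_iff
  rw [bell, this, Set.ncard_range_of_injective fun _ _ => Finpartition.ext,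
    Nat.card_eq_fintype_card, Fintype.card_congr (Finpartition.univCongr e)]

lemma bellT_eq_card {n : ℕ} (e : Fin n ≃ α) :
    bellT n = #{F : Finpartition (univ : Finset α) | ∀ t ∈ F.parts, 2 ≤ #t} := by
  have : {P | IsSetPartition P ∧ ∀ t ∈ P, 2 ≤ #t} =
      Finpartition.parts ''
        {F : Finpartition (univ : Finset (Fin n)) | ∀ t ∈ F.parts, 2 ≤ #t} := by
    ext P
    simp only [Set.mem_ofPred_eq, isSetPartition_iff, Set.mem_image]
    constructor
    · rintro ⟨⟨F, rfl⟩, h⟩; exact ⟨F, h, rfl⟩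
    · rintro ⟨F, h, rfl⟩; exact ⟨⟨F, rfl⟩, h⟩
  rw [bellT, this, Set.ncard_image_of_injective _ fun _ _ => Finpartition.ext,
    ← Nat.card_coe_set_eq, Nat.card_eq_fintype_card, ← Fintype.card_subtype]
  exact Fintype.card_congr ((Finpartition.univCongr e).subtypeEquiv fun F => by
    simp only [Finpartition.parts_univCongr, forall_mem_map, Equiv.coe_toEmbedding,
      Equiv.finsetCongr_apply, card_map, Set.mem_ofPred_eq])

end bellCard

lemma bellT_succ_add_bellT_le_bell (m : ℕ) : bellT (m + 1) + bellT m ≤ bell m := by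
  rw [bellT_eq_card (finSuccEquiv m), bellT_eq_card (Equiv.refl (Fin m)),
    bell_eq_card (Equiv.refl (Fin m))]
  exact Finpartition.card_filter_two_le_option_add_le

lemma bell_pos (m : ℕ) : 0 < bell m := by
  rw [bell_eq_card (Equiv.refl (Fin m))]
  exact Fintype.card_pos

lemma pow_le_bell_add (k j : ℕ) : k ^ j ≤ bell (k + j) := by
  simpa [bell_eq_card finSumFinEquiv.symm] using
    Finpartition.pow_card_le_card_sum (α := Fin j) (β := Fin k)

lemma eventually_pow_le_bell (K : ℕ) : ∀ᶠ m in atTop, K ^ m ≤ bell m := by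
  wlog hK : 0 < K
  · filter_upwards [this 1 one_pos] with m hm
    exact (Nat.pow_le_pow_left (by omega) m).trans hm
  filter_upwards [eventually_ge_atTop (2 * K ^ 2)] with m hm
  obtain ⟨j, rfl⟩ : ∃ j, m = K ^ 2 + j := ⟨m - K ^ 2, by omega⟩
  calc K ^ (K ^ 2 + j) ≤ K ^ (j + j) := Nat.pow_le_pow_right hK (by omega)
    _ = (K ^ 2) ^ j := by ring
    _ ≤ bell (K ^ 2 + j) := pow_le_bell_add _ _

lemma eventually_mul_bell_le_bell_succ (c : ℕ) :
    ∀ᶠ m in atTop, c * bell m ≤ bell (m + 1) := by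
  filter_upwards [eventually_pow_le_bell (2 * (2 * c)), eventually_ne_atTop 0] with m hgrowth hm
  rw [bell_eq_card (Equiv.refl (Fin m)), bell_eq_card (finSuccEquiv m)]
  refine Finpartition.mul_card_le_card_option ?_
  rw [← bell_eq_card (Equiv.refl (Fin m)), Fintype.card_fin]
  calc 2 * (2 * c) ^ m ≤ 2 ^ m * (2 * c) ^ m := Nat.mul_le_mul_right _ (Nat.le_self_pow hm 2)
    _ = (2 * (2 * c)) ^ m := (mul_pow _ _ _).symm
    _ ≤ bell m := hgrowth

theorem mul_bell_lt_general (c t : ℕ) :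
    ∃ N : ℕ, ∀ n ≥ N,
      (c : ℤ) * (bell (n - t - 1) : ℤ) <
        (bell (n - t) : ℤ) - (bellT (n - t) : ℤ) - (bellT (n - t - 1) : ℤ) := by
  obtain ⟨N, hN⟩ := eventually_atTop.1 (eventually_mul_bell_le_bell_succ (c + 2))
  refine ⟨N + t + 1, fun n hn => ?_⟩
  obtain ⟨m, rfl⟩ : ∃ m, n = m + t + 1 := ⟨n - t - 1, by omega⟩
  rw [show m + t + 1 - t - 1 = m by omega, show m + t + 1 - t = m + 1 by omega]
  have hratio := hN m (by omega)
  have hbellT := bellT_succ_add_bellT_le_bell m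
  have hpos := bell_pos m
  zify at hratio hbellT hpos
  linarith

theorem mul_bell_lt (c t : ℕ) (hc : 0 < c) (ht : 0 < t) :
    ∃ N : ℕ, ∀ n ≥ N,
      (c : ℤ) * (bell (n - t - 1) : ℤ) <
        (bell (n - t) : ℤ) - (bellT (n - t) : ℤ) - (bellT (n - t - 1) : ℤ) :=
  mul_bell_lt_general c t
end

section
/- For each fixed positive integer t there exists N such that for all n ≥ N, B̃_{n-t-1} > ∑_{k=⌊n/(t+1)+t-1⌋+1}^{n} C(n,k) · B̃_{n-k}. -/
/-!
Two injections between sets of singleton-free partitions carry the argument. Pulling a partition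
back along a surjection `Fin n → Fin m` shows that `bellT` is monotone on positive arguments, and
adjoining the block `{x, a + 1}` (for `x ≤ a`) to a partition of the remaining `a` points gives
`(a + 1) * bellT a ≤ bellT (a + 2)`, hence `(a + 1) ^ g * bellT a ≤ bellT (a + 2 * g)`.

With `q = n / (t + 1)` and `a = n - q - t`, every term of the tail is at most
`n.choose k * bellT a`, so the tail is at most `2 ^ n * bellT a`, whereas
`bellT (n - t - 1) ≥ (a + 1) ^ ((q - 1) / 2) * bellT a`.
For large `n` we have `a + 1 ≥ 2 ^ (4 * (t + 1))` and `4 * (t + 1) * ((q - 1) / 2) > n`.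
-/

open Finset Function

def singletonFreePartitions (n : ℕ) : Set (Finset (Finset (Fin n))) :=
  {P | IsSetPartition P ∧ ∀ b ∈ P, 2 ≤ b.card}

lemma bellT_eq_ncard (n : ℕ) : bellT n = (singletonFreePartitions n).ncard := rfl

section SetPartition

variable {m n : ℕ}

lemma sup_id_eq_univ_iff {P : Finset (Finset (Fin n))} :
    P.sup id = univ ↔ ∀ x, ∃ b ∈ P, x ∈ b := by
  simp only [eq_univ_iff_forall, mem_sup, id]

def comapBlock (f : Fin n → Fin m) (b : Finset (Fin m)) : Finset (Fin n) :=
  univ.filter (f · ∈ b)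

lemma mem_comapBlock {f : Fin n → Fin m} {b : Finset (Fin m)} {y : Fin n} :
    y ∈ comapBlock f b ↔ f y ∈ b := by
  simp [comapBlock]

lemma comapBlock_injective {f : Fin n → Fin m} (hf : Surjective f) :
    Injective (comapBlock f) := fun b c h => by
  ext x
  obtain ⟨y, rfl⟩ := hf x
  rw [← mem_comapBlock, h, mem_comapBlock]

lemma card_le_card_comapBlock {f : Fin n → Fin m} (hf : Surjective f) (b : Finset (Fin m)) :
    b.card ≤ (comapBlock f b).card := by
  refine le_trans (card_le_card fun x hx => ?_) (card_image_le (f := f))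
  obtain ⟨y, rfl⟩ := hf x
  exact mem_image_of_mem f (mem_comapBlock.2 hx)

lemma IsSetPartition.comap {f : Fin n → Fin m} (hf : Surjective f)
    {P : Finset (Finset (Fin m))} (hP : IsSetPartition P) :
    IsSetPartition (P.map ⟨comapBlock f, comapBlock_injective hf⟩) := by
  obtain ⟨hne, hdisj, hcover⟩ := hP
  rw [sup_id_eq_univ_iff] at hcover
  refine ⟨?_, ?_, sup_id_eq_univ_iff.2 fun y => ?_⟩
  · simp only [forall_mem_map, Embedding.coeFn_mk]
    intro b hb
    obtain ⟨x, hx⟩ := hne b hb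
    obtain ⟨y, rfl⟩ := hf x
    exact ⟨y, mem_comapBlock.2 hx⟩
  · simp only [forall_mem_map, Embedding.coeFn_mk]
    intro b hb c hc hbc
    exact disjoint_filter.2 fun y _ hyb hyc =>
      disjoint_left.1 (hdisj b hb c hc fun h => hbc (h ▸ rfl)) hyb hyc
  · obtain ⟨b, hb, hyb⟩ := hcover (f y)
    exact ⟨_, mem_map_of_mem _ hb, mem_comapBlock.2 hyb⟩

end SetPartition

lemma bellT_le_of_surjective {m n : ℕ} {f : Fin n → Fin m} (hf : Surjective f) :
    bellT m ≤ bellT n :=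
  Set.ncard_le_ncard_of_injOn (fun P => P.map ⟨comapBlock f, comapBlock_injective hf⟩)
    (fun _ ⟨hP, hcard⟩ => ⟨hP.comap hf, by
      simp only [forall_mem_map, Embedding.coeFn_mk]
      exact fun b hb => (hcard b hb).trans (card_le_card_comapBlock hf b)⟩)
    (map_injective _).injOn

lemma bellT_zero_le_one : bellT 0 ≤ 1 :=
  (Set.ncard_le_one (Set.toFinite _)).2 fun P hP Q hQ => by
    have hempty : ∀ R ∈ singletonFreePartitions 0, R = ∅ := fun R hR =>
      eq_empty_of_forall_notMem fun b hb => (hR.1.1 b hb).elim fun x _ => x.elim0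
    rw [hempty P hP, hempty Q hQ]

lemma one_le_bellT {n : ℕ} (hn : 2 ≤ n) : 1 ≤ bellT n := by
  have : Nonempty (Fin n) := ⟨⟨0, by omega⟩⟩
  refine Nat.one_le_iff_ne_zero.2
    (Set.ncard_ne_zero_of_mem (a := {univ}) ⟨⟨?_, ?_, ?_⟩, ?_⟩)
  all_goals simp [hn]

lemma bellT_mono {m n : ℕ} (hmn : m ≤ n) (hn : 2 ≤ n) : bellT m ≤ bellT n := by
  cases m with
  | zero => exact bellT_zero_le_one.trans (one_le_bellT hn)
  | succ k =>
    refine bellT_le_of_surjective (f := fun i : Fin n => Fin.clamp i k) fun j => ?_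
    exact ⟨⟨j, by omega⟩, Fin.ext (by simp [Fin.clamp, j.is_le])⟩

section ComplBlock

variable {m n : ℕ}

def insertComplMap (e : Fin m ↪ Fin n) (P : Finset (Finset (Fin m))) :
    Finset (Finset (Fin n)) :=
  insert (univ.map e)ᶜ (P.map (mapEmbedding e).toEmbedding)

lemma map_subset_univ_map (e : Fin m ↪ Fin n) (b : Finset (Fin m)) : b.map e ⊆ univ.map e :=
  map_subset_map.2 (subset_univ b)

lemma IsSetPartition.insertComplMap {e : Fin m ↪ Fin n} (he : (univ.map e)ᶜ.Nonempty)
    {P : Finset (Finset (Fin m))} (hP : IsSetPartition P) :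
    IsSetPartition (insertComplMap e P) := by
  obtain ⟨hne, hdisj, hcover⟩ := hP
  rw [sup_id_eq_univ_iff] at hcover
  have hcompl (b : Finset (Fin m)) : Disjoint (b.map e) (univ.map e)ᶜ :=
    disjoint_compl_right.mono_left (map_subset_univ_map e b)
  simp only [_root_.insertComplMap, IsSetPartition, forall_mem_insert, exists_mem_insert,
    forall_mem_map, RelEmbedding.coe_toEmbedding, mapEmbedding_apply, sup_id_eq_univ_iff]
  refine ⟨⟨he, fun b hb => (hne b hb).map⟩,
    ⟨⟨fun h => (h rfl).elim, fun b _ _ => (hcompl b).symm⟩,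
      fun b hb => ⟨fun _ => hcompl b, fun c hc hbc =>
        (disjoint_map e).2 (hdisj b hb c hc fun h => hbc (h ▸ rfl))⟩⟩, fun y => ?_⟩
  by_cases hy : y ∈ univ.map e
  · obtain ⟨x, -, rfl⟩ := mem_map.1 hy
    obtain ⟨b, hb, hxb⟩ := hcover x
    exact Or.inr ⟨b.map e, mem_map_of_mem _ hb, mem_map_of_mem e hxb⟩
  · exact Or.inl (mem_compl.2 hy)

lemma insertComplMap_inj {e e' : Fin m ↪ Fin n} {z : Fin n} (hz : z ∉ univ.map e)
    (hz' : z ∉ univ.map e') {P Q : Finset (Finset (Fin m))}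
    (h : insertComplMap e P = insertComplMap e' Q) :
    univ.map e = univ.map e' ∧
      P.map (mapEmbedding e).toEmbedding = Q.map (mapEmbedding e').toEmbedding := by
  have hnotMem {e : Fin m ↪ Fin n} (P : Finset (Finset (Fin m))) {c : Finset (Fin n)}
      (hzc : z ∈ c) (hz : z ∉ univ.map e) : c ∉ P.map (mapEmbedding e).toEmbedding := by
    simp only [mem_map, RelEmbedding.coe_toEmbedding, mapEmbedding_apply, not_exists, not_and]
    rintro b - rfl
    exact hz (map_subset_univ_map e b hzc)
  have hmem : (univ.map e)ᶜ ∈ insertComplMap e' Q := h ▸ mem_insert_self _ _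
  have hrange : univ.map e = univ.map e' := by
    rcases mem_insert.1 hmem with hc | hc
    · exact compl_injective hc
    · exact absurd hc (hnotMem Q (mem_compl.2 hz) hz')
  refine ⟨hrange, ?_⟩
  unfold insertComplMap at h
  rw [← erase_insert (hnotMem P (mem_compl.2 hz) hz), h, hrange,
    erase_insert (hnotMem Q (mem_compl.2 hz') hz')]

end ComplBlock

lemma insertComplMap_mem_singletonFreePartitions {m n : ℕ} {e : Fin m ↪ Fin n}
    (he : 2 ≤ (univ.map e)ᶜ.card) {P : Finset (Finset (Fin m))}
    (hP : P ∈ singletonFreePartitions m) : insertComplMap e P ∈ singletonFreePartitions n := by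
  obtain ⟨hP, hcard⟩ := hP
  refine ⟨hP.insertComplMap (card_pos.1 (by omega)), ?_⟩
  simp only [insertComplMap, forall_mem_insert, forall_mem_map, RelEmbedding.coe_toEmbedding,
    mapEmbedding_apply, card_map]
  exact ⟨he, hcard⟩

section PairBlock

variable {a : ℕ}

def pairEmbedding (x : Fin (a + 1)) : Fin a ↪ Fin (a + 2) :=
  (Fin.succAboveEmb x).trans Fin.castSuccEmb

lemma mem_univ_map_pairEmbedding {x : Fin (a + 1)} {y : Fin (a + 2)} :
    y ∈ univ.map (pairEmbedding x) ↔ y ≠ x.castSucc ∧ y ≠ Fin.last (a + 1) := by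
  induction y using Fin.lastCases with
  | last => simp [pairEmbedding, Fin.castSucc_ne_last]
  | cast z => simp [pairEmbedding, Fin.exists_succAbove_eq_iff, Fin.castSucc_ne_last]

lemma card_compl_univ_map_pairEmbedding (x : Fin (a + 1)) :
    (univ.map (pairEmbedding x))ᶜ.card = 2 := by
  simp [card_compl]

lemma bellT_mul_le (a : ℕ) : (a + 1) * bellT a ≤ bellT (a + 2) := by
  have hprod : ((Set.univ : Set (Fin (a + 1))) ×ˢ singletonFreePartitions a).ncard =
      (a + 1) * bellT a := by
    rw [Set.ncard_prod, Set.ncard_univ, Nat.card_eq_fintype_card, Fintype.card_fin, bellT_eq_ncard]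
  rw [← hprod, bellT_eq_ncard]
  refine Set.ncard_le_ncard_of_injOn (fun p => insertComplMap (pairEmbedding p.1) p.2)
    (fun p hp => insertComplMap_mem_singletonFreePartitions
      (card_compl_univ_map_pairEmbedding p.1).ge hp.2) ?_
  rintro ⟨x, P⟩ - ⟨y, Q⟩ - h
  have hlast (x : Fin (a + 1)) : Fin.last (a + 1) ∉ univ.map (pairEmbedding x) :=
    fun h => (mem_univ_map_pairEmbedding.1 h).2 rfl
  obtain ⟨hrange, hmap⟩ := insertComplMap_inj (hlast x) (hlast y) h
  obtain rfl : x = y := by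
    by_contra hxy
    have hx : x.castSucc ∈ univ.map (pairEmbedding y) :=
      mem_univ_map_pairEmbedding.2 ⟨by simpa, Fin.castSucc_ne_last x⟩
    exact (mem_univ_map_pairEmbedding.1 (hrange ▸ hx)).1 rfl
  rw [show P = Q from map_injective _ hmap]

end PairBlock

lemma pow_mul_bellT_le (a g : ℕ) : (a + 1) ^ g * bellT a ≤ bellT (a + 2 * g) := by
  induction g with
  | zero => simp
  | succ g ih =>
    calc (a + 1) ^ (g + 1) * bellT a = (a + 1) * ((a + 1) ^ g * bellT a) := by ring
      _ ≤ (a + 2 * g + 1) * bellT (a + 2 * g) := Nat.mul_le_mul (by omega) ih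
      _ ≤ bellT (a + 2 * (g + 1)) := bellT_mul_le (a + 2 * g)

lemma sum_Icc_choose_mul_bellT_le {n s : ℕ} (hs : 2 ≤ n - s) :
    ∑ k ∈ Icc s n, n.choose k * bellT (n - k) ≤ 2 ^ n * bellT (n - s) :=
  calc ∑ k ∈ Icc s n, n.choose k * bellT (n - k)
      ≤ ∑ k ∈ Icc s n, n.choose k * bellT (n - s) :=
        sum_le_sum fun k hk => Nat.mul_le_mul_left _ (bellT_mono (by simp at hk; omega) hs)
    _ ≤ ∑ k ∈ range (n + 1), n.choose k * bellT (n - s) :=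
        sum_le_sum_of_subset fun k hk => by simp only [mem_Icc, mem_range] at hk ⊢; omega
    _ = 2 ^ n * bellT (n - s) := by rw [← sum_mul, Nat.sum_range_choose]

lemma tail_index_bounds {t n q : ℕ} (ht : 0 < t)
    (hn : 2 ^ (4 * (t + 1) + 1) + 8 * (t + 1) ≤ n) (hq : (t + 1) * q ≤ n)
    (hq' : n < (t + 1) * q + (t + 1)) :
    0 < q ∧ 2 ^ (4 * (t + 1)) ≤ n - q - t + 1 ∧ n < 4 * (t + 1) * ((q - 1) / 2) := by
  have h8 : 2 ^ 8 ≤ 2 ^ (4 * (t + 1)) := Nat.pow_le_pow_right two_pos (by omega)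
  rw [pow_succ] at hn
  have hq1 : 0 < q := Nat.pos_of_ne_zero fun h => by simp only [h, mul_zero, zero_add] at hq'; omega
  have h2q : 2 * q ≤ (t + 1) * q := Nat.mul_le_mul_right q (by omega)
  have h2g : (t + 1) * q ≤ 2 * ((t + 1) * ((q - 1) / 2)) + 2 * (t + 1) :=
    calc (t + 1) * q ≤ (t + 1) * (2 * ((q - 1) / 2) + 2) := Nat.mul_le_mul_left _ (by omega)
      _ = 2 * ((t + 1) * ((q - 1) / 2)) + 2 * (t + 1) := by ring
  rw [mul_assoc]
  omega

theorem bellT_gt_tail_sum (t : ℕ) (ht : 0 < t) :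
    ∃ N : ℕ, ∀ n ≥ N,
      bellT (n - t - 1) >
        ∑ k ∈ Finset.Icc (n / (t + 1) + t - 1 + 1) n, n.choose k * bellT (n - k) := by
  refine ⟨2 ^ (4 * (t + 1) + 1) + 8 * (t + 1), fun n hn => ?_⟩
  obtain ⟨hq, ha, hexp⟩ := tail_index_bounds ht hn (Nat.mul_div_le n (t + 1))
    (by rw [← Nat.mul_succ]; exact Nat.lt_mul_div_succ n (by omega))
  generalize n / (t + 1) = q at hq ha hexp ⊢
  have h8 : 2 ^ 8 ≤ 2 ^ (4 * (t + 1)) := Nat.pow_le_pow_right two_pos (by omega)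
  obtain ⟨a, rfl⟩ : ∃ a, a + q + t = n := ⟨n - q - t, by omega⟩
  calc ∑ k ∈ Icc (q + t - 1 + 1) (a + q + t), (a + q + t).choose k * bellT (a + q + t - k)
      ≤ 2 ^ (a + q + t) * bellT a := by
        have hs : a + q + t - (q + t - 1 + 1) = a := by omega
        simpa only [hs] using
          sum_Icc_choose_mul_bellT_le (n := a + q + t) (s := q + t - 1 + 1) (by omega)
    _ < (a + 1) ^ ((q - 1) / 2) * bellT a := by
        refine Nat.mul_lt_mul_of_pos_right ?_ (one_le_bellT (by omega))
        calc 2 ^ (a + q + t) < 2 ^ (4 * (t + 1) * ((q - 1) / 2)) :=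
              Nat.pow_lt_pow_right one_lt_two hexp
          _ ≤ (a + 1) ^ ((q - 1) / 2) := by
              rw [pow_mul]; exact Nat.pow_le_pow_left (by omega) _
    _ ≤ bellT (a + 2 * ((q - 1) / 2)) := pow_mul_bellT_le a _
    _ ≤ bellT (a + q + t - t - 1) := bellT_mono (by omega) (by omega)
end

section
/- Given any t-intersecting family A of set partitions of [n], there exists a t-intersecting family A* of set partitions of [n] with |A*| = |A| which is compressed, i.e. S_{ij}(A*) = A* for all i ≠ j in [n], obtained from A by repeatedly applying splitting operations S_{ij}. -/
/-- The `(i,j)`-split of a set partition `P`. -/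
noncomputable def splitP {n : ℕ} (i j : Fin n) (P : Finset (Finset (Fin n))) :
    Finset (Finset (Fin n)) :=
  if h : ∃ B, B ∈ P ∧ i ∈ B ∧ j ∈ B then
    (P \ {h.choose}) ∪ {{i}, h.choose \ {i}}
  else P

/-- The `(i,j)`-splitting of a family of set partitions. -/
noncomputable def splitFam {n : ℕ} (i j : Fin n)
    (A : Set (Finset (Finset (Fin n)))) : Set (Finset (Finset (Fin n))) :=
  (A \ {P ∈ A | splitP i j P ∉ A}) ∪ (splitP i j '' {P ∈ A | splitP i j P ∉ A})

/-- A family is `t`-intersecting if any two members share at least `t` blocks. -/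
def TInter {n : ℕ} (t : ℕ) (A : Set (Finset (Finset (Fin n)))) : Prop :=
  ∀ P ∈ A, ∀ Q ∈ A, t ≤ (P ∩ Q).card

section Compression

variable {α : Type*}

-- `splitFam i j` is `compression (splitP i j)` by definition.
def compression (f : α → α) (A : Set α) : Set α :=
  (A \ {x ∈ A | f x ∉ A}) ∪ f '' {x ∈ A | f x ∉ A}

variable {f : α → α} {A : Set α}

lemma mem_compression {y : α} :
    y ∈ compression f A ↔ (y ∈ A ∧ f y ∈ A) ∨ ∃ x ∈ A, f x ∉ A ∧ f x = y := by
  simp only [compression, Set.mem_union, Set.mem_sdiff, Set.mem_ofPred_eq, Set.mem_image]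
  tauto

lemma exists_of_compression_ne (h : compression f A ≠ A) : ∃ x ∈ A, f x ∉ A := by
  contrapose! h
  have hempty : {x ∈ A | f x ∉ A} = ∅ :=
    Set.sep_eq_empty_iff_mem_false.mpr fun x hx hfx => hfx (h x hx)
  simp [compression, hempty]

lemma disjoint_sdiff_image_compression :
    Disjoint (A \ {x ∈ A | f x ∉ A}) (f '' {x ∈ A | f x ∉ A}) := by
  rw [Set.disjoint_right]
  rintro _ ⟨x, ⟨-, hfx⟩, rfl⟩ hA
  exact hfx hA.1

lemma ncard_compression (hA : A.Finite) (hf : Set.InjOn f {x ∈ A | f x ∉ A}) :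
    (compression f A).ncard = A.ncard := by
  rw [compression,
    Set.ncard_union_eq disjoint_sdiff_image_compression hA.sdiff ((hA.sep _).image f),
    hf.ncard_image, Set.ncard_sdiff_add_ncard_of_subset (Set.sep_subset _ _) hA]

lemma finsum_mem_compression_lt {M : Type*} [AddCommMonoid M] [PartialOrder M]
    [IsOrderedCancelAddMonoid M] {g : α → M} (hA : A.Finite)
    (hf : Set.InjOn f {x ∈ A | f x ∉ A}) (hx : ∃ x ∈ A, f x ∉ A)
    (hg : ∀ x ∈ A, f x ∉ A → g (f x) < g x) :
    ∑ᶠ y ∈ compression f A, g y < ∑ᶠ x ∈ A, g x := by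
  set T := {x ∈ A | f x ∉ A}
  have hT : T.Finite := hA.sep _
  have hlt : ∑ᶠ x ∈ T, g (f x) < ∑ᶠ x ∈ T, g x := by
    rw [finsum_mem_eq_finite_toFinset_sum _ hT, finsum_mem_eq_finite_toFinset_sum _ hT]
    obtain ⟨x, hxA, hfx⟩ := hx
    refine Finset.sum_lt_sum_of_nonempty ⟨x, by simpa [T] using ⟨hxA, hfx⟩⟩ fun y hy => ?_
    rw [Set.Finite.mem_toFinset] at hy
    exact hg y hy.1 hy.2
  calc ∑ᶠ y ∈ compression f A, g y
      = ∑ᶠ x ∈ A \ T, g x + ∑ᶠ x ∈ T, g (f x) := by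
        rw [compression,
          finsum_mem_union disjoint_sdiff_image_compression hA.sdiff (hT.image f),
          finsum_mem_image hf]
    _ < ∑ᶠ x ∈ A \ T, g x + ∑ᶠ x ∈ T, g x := by gcongr
    _ = ∑ᶠ x ∈ A, g x := by rw [add_comm, finsum_mem_add_sdiff (Set.sep_subset _ _) hA]

end Compression

lemma exists_foldl_fixed_of_measure_lt {α ι : Type*} (step : α → ι → α)
    (allowed : ι → Prop) (inv : α → Prop) (μ : α → ℕ)
    (hinv : ∀ a k, allowed k → inv a → inv (step a k))
    (hμ : ∀ a k, allowed k → inv a → step a k ≠ a → μ (step a k) < μ a)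
    (a : α) (ha : inv a) :
    ∃ L : List ι, (∀ k ∈ L, allowed k) ∧ inv (L.foldl step a) ∧
      ∀ k, allowed k → step (L.foldl step a) k = L.foldl step a := by
  induction hm : μ a using Nat.strong_induction_on generalizing a with
  | _ m ih =>
    by_cases hfix : ∀ k, allowed k → step a k = a
    · exact ⟨[], by simp, ha, hfix⟩
    · push Not at hfix
      obtain ⟨k, hk, hne⟩ := hfix
      obtain ⟨L, hL, hinvL, hfixL⟩ :=
        ih _ (hm ▸ hμ a k hk ha hne) (step a k) (hinv a k hk ha) rfl
      exact ⟨k :: L, List.forall_mem_cons.mpr ⟨hk, hL⟩, hinvL, hfixL⟩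

section Partition

variable {n : ℕ} {P Q : Finset (Finset (Fin n))} {B C : Finset (Fin n)} {i j : Fin n}

lemma IsSetPartition.eq_of_mem_of_mem_s13 (hP : IsSetPartition P) (hB : B ∈ P) (hC : C ∈ P)
    {x : Fin n} (hxB : x ∈ B) (hxC : x ∈ C) : B = C := by
  by_contra h
  exact Finset.disjoint_left.mp (hP.2.1 B hB C hC h) hxB hxC

lemma IsSetPartition.card_le (hP : IsSetPartition P) : P.card ≤ n :=
  calc P.card ≤ (P.biUnion id).card :=
        Finset.card_le_card_biUnion (fun b hb c hc hbc => hP.2.1 b hb c hc hbc) hP.1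
    _ ≤ n := (Finset.card_le_univ _).trans_eq (Fintype.card_fin n)

lemma splitP_eq (hP : IsSetPartition P) (hB : B ∈ P) (hi : i ∈ B) (hj : j ∈ B) :
    splitP i j P = (P \ {B}) ∪ {{i}, B \ {i}} := by
  have h : ∃ B, B ∈ P ∧ i ∈ B ∧ j ∈ B := ⟨B, hB, hi, hj⟩
  rw [splitP, dif_pos h, hP.eq_of_mem_of_mem_s13 h.choose_spec.1 hB h.choose_spec.2.1 hi]

lemma exists_mem_of_splitP_ne (h : splitP i j P ≠ P) : ∃ B ∈ P, i ∈ B ∧ j ∈ B := by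
  by_contra hB
  exact h (dif_neg (by simpa only [exists_prop] using hB))

lemma mem_splitP_iff (hP : IsSetPartition P) (hB : B ∈ P) (hi : i ∈ B) (hj : j ∈ B) :
    C ∈ splitP i j P ↔ (C ∈ P ∧ C ≠ B) ∨ C = {i} ∨ C = B \ {i} := by
  rw [splitP_eq hP hB hi hj]
  simp only [Finset.mem_union, Finset.mem_sdiff, Finset.mem_insert, Finset.mem_singleton]

lemma mem_splitP_of_mem (hP : IsSetPartition P) (hC : C ∈ P) (hij : ¬(i ∈ C ∧ j ∈ C)) :
    C ∈ splitP i j P := by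
  by_cases h : ∃ B ∈ P, i ∈ B ∧ j ∈ B
  · obtain ⟨B, hB, hi, hj⟩ := h
    refine (mem_splitP_iff hP hB hi hj).mpr (.inl ⟨hC, ?_⟩)
    rintro rfl
    exact hij ⟨hi, hj⟩
  · rwa [splitP, dif_neg (by simpa only [exists_prop] using h)]

lemma singleton_notMem_of_mem (hP : IsSetPartition P) (hij : i ≠ j) (hB : B ∈ P) (hi : i ∈ B)
    (hj : j ∈ B) : ({i} : Finset (Fin n)) ∉ P := by
  intro h
  have := hP.eq_of_mem_of_mem_s13 h hB (Finset.mem_singleton_self i) hi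
  subst this
  exact hij (Finset.mem_singleton.mp hj).symm

lemma sdiff_singleton_notMem_of_mem (hP : IsSetPartition P) (hij : i ≠ j) (hB : B ∈ P)
    (hi : i ∈ B) (hj : j ∈ B) : B \ {i} ∉ P := by
  intro h
  have hj' : j ∈ B \ {i} := Finset.mem_sdiff.mpr ⟨hj, by simpa using hij.symm⟩
  have := hP.eq_of_mem_of_mem_s13 h hB hj' hj
  rw [← this] at hi
  simp at hi

lemma card_splitP (hP : IsSetPartition P) (hij : i ≠ j) (hB : B ∈ P) (hi : i ∈ B)
    (hj : j ∈ B) : (splitP i j P).card = P.card + 1 := by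
  have hne : ({i} : Finset (Fin n)) ≠ B \ {i} := by
    intro h
    have : i ∈ B \ {i} := h ▸ Finset.mem_singleton_self i
    simp at this
  have hdisj : Disjoint (P \ {B}) {{i}, B \ {i}} := by
    simp only [Finset.disjoint_insert_right, Finset.disjoint_singleton_right, Finset.mem_sdiff]
    exact ⟨fun h => singleton_notMem_of_mem hP hij hB hi hj h.1,
      fun h => sdiff_singleton_notMem_of_mem hP hij hB hi hj h.1⟩
  rw [splitP_eq hP hB hi hj, Finset.card_union_of_disjoint hdisj, Finset.card_pair hne,
    Finset.card_sdiff_of_subset (Finset.singleton_subset_iff.mpr hB), Finset.card_singleton]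
  have := Finset.card_pos.mpr ⟨B, hB⟩
  omega

lemma singleton_mem_splitP (hP : IsSetPartition P) (hB : B ∈ P) (hi : i ∈ B) (hj : j ∈ B) :
    {i} ∈ splitP i j P :=
  (mem_splitP_iff hP hB hi hj).mpr (.inr (.inl rfl))

lemma sdiff_singleton_mem_splitP (hP : IsSetPartition P) (hB : B ∈ P) (hi : i ∈ B)
    (hj : j ∈ B) : B \ {i} ∈ splitP i j P :=
  (mem_splitP_iff hP hB hi hj).mpr (.inr (.inr rfl))

lemma IsSetPartition.splitP (hP : IsSetPartition P) (hij : i ≠ j) :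
    IsSetPartition (splitP i j P) := by
  by_cases h : ∃ B ∈ P, i ∈ B ∧ j ∈ B
  swap
  · rwa [_root_.splitP, dif_neg (by simpa only [exists_prop] using h)]
  obtain ⟨B, hB, hi, hj⟩ := h
  have hjB : j ∈ B \ {i} := Finset.mem_sdiff.mpr ⟨hj, by simpa using hij.symm⟩
  have hiB : {i} ⊆ B := Finset.singleton_subset_iff.mpr hi
  refine ⟨fun C hC => ?_, fun C hC D hD hCD => ?_, ?_⟩
  · rcases (mem_splitP_iff hP hB hi hj).mp hC with ⟨hC, -⟩ | rfl | rfl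
    exacts [hP.1 C hC, Finset.singleton_nonempty i, ⟨j, hjB⟩]
  · have hsub : ∀ D ∈ ({{i}, B \ {i}} : Finset (Finset (Fin n))), D ⊆ B := by
      simp [hiB, Finset.sdiff_subset]
    rw [splitP_eq hP hB hi hj, Finset.mem_union, Finset.mem_sdiff, Finset.mem_singleton] at hC hD
    rcases hC with ⟨hC, hCB⟩ | hC <;> rcases hD with ⟨hD, hDB⟩ | hD
    · exact hP.2.1 C hC D hD hCD
    · exact (hP.2.1 C hC B hB hCB).mono_right (hsub D hD)
    · exact ((hP.2.1 D hD B hB hDB).mono_right (hsub C hC)).symm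
    · simp only [Finset.mem_insert, Finset.mem_singleton] at hC hD
      rcases hC with rfl | rfl <;> rcases hD with rfl | rfl <;> simp_all
  · have hpair : ({{i}, B \ {i}} : Finset (Finset (Fin n))).sup id = B := by
      rw [Finset.sup_insert, Finset.sup_singleton, id, id, Finset.sup_eq_union,
        Finset.union_sdiff_of_subset hiB]
    rw [splitP_eq hP hB hi hj, Finset.sup_union, hpair, ← hP.2.2]
    conv_rhs => rw [← Finset.sdiff_union_of_subset (Finset.singleton_subset_iff.mpr hB)]
    rw [Finset.sup_union, Finset.sup_singleton, id]

lemma splitP_sdiff_pair (hP : IsSetPartition P) (hij : i ≠ j) (hB : B ∈ P) (hi : i ∈ B)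
    (hj : j ∈ B) : splitP i j P \ {{i}, B \ {i}} = P \ {B} := by
  rw [splitP_eq hP hB hi hj, Finset.union_sdiff_right, Finset.sdiff_eq_self_of_disjoint]
  simp only [Finset.disjoint_insert_right, Finset.disjoint_singleton_right, Finset.mem_sdiff]
  exact ⟨fun h => singleton_notMem_of_mem hP hij hB hi hj h.1,
    fun h => sdiff_singleton_notMem_of_mem hP hij hB hi hj h.1⟩

lemma splitP_injOn (hij : i ≠ j) :
    Set.InjOn (splitP i j) {P | IsSetPartition P ∧ splitP i j P ≠ P} := by
  rintro P ⟨hP, hPs⟩ Q ⟨hQ, hQs⟩ heq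
  obtain ⟨B, hB, hi, hj⟩ := exists_mem_of_splitP_ne hPs
  obtain ⟨B', hB', hi', hj'⟩ := exists_mem_of_splitP_ne hQs
  have hjB : j ∈ B \ {i} := Finset.mem_sdiff.mpr ⟨hj, by simpa using hij.symm⟩
  have hjB' : j ∈ B' \ {i} := Finset.mem_sdiff.mpr ⟨hj', by simpa using hij.symm⟩
  -- both `B \ {i}` and `B' \ {i}` are the block of `j` in the common split
  have hsdiff : B \ {i} = B' \ {i} :=
    (hQ.splitP hij).eq_of_mem_of_mem_s13 (heq ▸ sdiff_singleton_mem_splitP hP hB hi hj)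
      (sdiff_singleton_mem_splitP hQ hB' hi' hj') hjB hjB'
  have hBB' : B = B' := by
    rw [← Finset.insert_erase hi, ← Finset.insert_erase hi',
      ← Finset.sdiff_singleton_eq_erase, ← Finset.sdiff_singleton_eq_erase, hsdiff]
  subst hBB'
  rw [← Finset.sdiff_union_of_subset (Finset.singleton_subset_iff.mpr hB),
    ← Finset.sdiff_union_of_subset (Finset.singleton_subset_iff.mpr hB'),
    ← splitP_sdiff_pair hP hij hB hi hj, ← splitP_sdiff_pair hQ hij hB' hi' hj', heq]

lemma card_inter_le_card_splitP_inter_splitP (hP : IsSetPartition P) (hQ : IsSetPartition Q) :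
    (P ∩ Q).card ≤ (splitP i j P ∩ splitP i j Q).card := by
  by_cases h : ∃ D ∈ P ∩ Q, i ∈ D ∧ j ∈ D
  · obtain ⟨D, hD, hi, hj⟩ := h
    obtain ⟨hDP, hDQ⟩ := Finset.mem_inter.mp hD
    have hsub : insert {i} ((P ∩ Q).erase D) ⊆ splitP i j P ∩ splitP i j Q := by
      intro C hC
      rcases Finset.mem_insert.mp hC with rfl | hC
      · exact Finset.mem_inter.mpr
          ⟨singleton_mem_splitP hP hDP hi hj, singleton_mem_splitP hQ hDQ hi hj⟩
      · obtain ⟨hCD, hC⟩ := Finset.mem_erase.mp hC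
        obtain ⟨hCP, hCQ⟩ := Finset.mem_inter.mp hC
        exact Finset.mem_inter.mpr ⟨(mem_splitP_iff hP hDP hi hj).mpr (.inl ⟨hCP, hCD⟩),
          (mem_splitP_iff hQ hDQ hi hj).mpr (.inl ⟨hCQ, hCD⟩)⟩
    have hnotMem : ({i} : Finset (Fin n)) ∉ (P ∩ Q).erase D := fun hmem => by
      obtain ⟨hne, hmem⟩ := Finset.mem_erase.mp hmem
      exact hne (hP.eq_of_mem_of_mem_s13 (Finset.mem_inter.mp hmem).1 hDP
        (Finset.mem_singleton_self i) hi)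
    calc (P ∩ Q).card = (insert {i} ((P ∩ Q).erase D)).card := by
          rw [Finset.card_insert_of_notMem hnotMem, Finset.card_erase_add_one hD]
      _ ≤ _ := Finset.card_le_card hsub
  · refine Finset.card_le_card fun C hC => ?_
    obtain ⟨hCP, hCQ⟩ := Finset.mem_inter.mp hC
    have hij : ¬(i ∈ C ∧ j ∈ C) := fun hij => h ⟨C, hC, hij⟩
    exact Finset.mem_inter.mpr ⟨mem_splitP_of_mem hP hCP hij, mem_splitP_of_mem hQ hCQ hij⟩

lemma inter_splitP_subset_splitP_inter (hP : IsSetPartition P) (hQ : IsSetPartition Q)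
    (hij : i ≠ j) (hB : B ∈ P) (hi : i ∈ B) (hj : j ∈ B) (hBQ : B ∈ Q) :
    P ∩ splitP i j Q ⊆ splitP i j P ∩ Q := by
  intro C hC
  obtain ⟨hCP, hCQ⟩ := Finset.mem_inter.mp hC
  rcases (mem_splitP_iff hQ hBQ hi hj).mp hCQ with ⟨hCQ, hCB⟩ | rfl | rfl
  · exact Finset.mem_inter.mpr ⟨(mem_splitP_iff hP hB hi hj).mpr (.inl ⟨hCP, hCB⟩), hCQ⟩
  · exact absurd hCP (singleton_notMem_of_mem hP hij hB hi hj)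
  · exact absurd hCP (sdiff_singleton_notMem_of_mem hP hij hB hi hj)

lemma inter_subset_splitP_inter (hP : IsSetPartition P) (hB : B ∈ P) (hi : i ∈ B) (hj : j ∈ B)
    (hBQ : B ∉ Q) : P ∩ Q ⊆ splitP i j P ∩ Q := by
  intro C hC
  obtain ⟨hCP, hCQ⟩ := Finset.mem_inter.mp hC
  have hCB : C ≠ B := by rintro rfl; exact hBQ hCQ
  exact Finset.mem_inter.mpr ⟨(mem_splitP_iff hP hB hi hj).mpr (.inl ⟨hCP, hCB⟩), hCQ⟩

end Partition

section Family

variable {n t : ℕ} {A : Set (Finset (Finset (Fin n)))} {i j : Fin n}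

lemma injOn_splitP_of_forall_isSetPartition (hpart : ∀ P ∈ A, IsSetPartition P)
    (hij : i ≠ j) :
    Set.InjOn (splitP i j) {P ∈ A | splitP i j P ∉ A} :=
  (splitP_injOn hij).mono fun P hP =>
    show IsSetPartition P ∧ splitP i j P ≠ P from
      ⟨hpart P hP.1, fun h => hP.2 (by rw [h]; exact hP.1)⟩

lemma forall_isSetPartition_splitFam (hpart : ∀ P ∈ A, IsSetPartition P) (hij : i ≠ j) :
    ∀ P ∈ splitFam i j A, IsSetPartition P := by
  intro P hP
  rcases mem_compression.mp hP with ⟨hP, -⟩ | ⟨Q, hQ, -, rfl⟩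
  exacts [hpart P hP, (hpart Q hQ).splitP hij]

lemma ncard_splitFam (hpart : ∀ P ∈ A, IsSetPartition P) (hij : i ≠ j) :
    (splitFam i j A).ncard = A.ncard :=
  ncard_compression (Set.toFinite A) (injOn_splitP_of_forall_isSetPartition hpart hij)

lemma finsum_splitFam_lt (hpart : ∀ P ∈ A, IsSetPartition P) (hij : i ≠ j)
    (hne : splitFam i j A ≠ A) :
    ∑ᶠ P ∈ splitFam i j A, (n - P.card) < ∑ᶠ P ∈ A, (n - P.card) := by
  refine finsum_mem_compression_lt (Set.toFinite A)
    (injOn_splitP_of_forall_isSetPartition hpart hij) (exists_of_compression_ne hne)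
    fun P hP hPs => ?_
  obtain ⟨B, hB, hi, hj⟩ := exists_mem_of_splitP_ne fun h => hPs (by rwa [h])
  -- the subtraction does not truncate: the split is again a partition, so has at most `n` blocks
  have hle := ((hpart P hP).splitP hij).card_le
  rw [card_splitP (hpart P hP) hij hB hi hj] at hle ⊢
  omega

lemma le_card_splitP_inter (hpart : ∀ P ∈ A, IsSetPartition P) (hA : TInter t A) (hij : i ≠ j)
    {P Q : Finset (Finset (Fin n))} (hP : P ∈ A) (hPs : splitP i j P ∉ A) (hQ : Q ∈ A)
    (hQs : splitP i j Q ∈ A) : t ≤ (splitP i j P ∩ Q).card := by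
  obtain ⟨B, hB, hi, hj⟩ := exists_mem_of_splitP_ne fun h => hPs (by rwa [h])
  by_cases hBQ : B ∈ Q
  · exact (hA P hP _ hQs).trans (Finset.card_le_card
      (inter_splitP_subset_splitP_inter (hpart P hP) (hpart Q hQ) hij hB hi hj hBQ))
  · exact (hA P hP Q hQ).trans
      (Finset.card_le_card (inter_subset_splitP_inter (hpart P hP) hB hi hj hBQ))

lemma TInter.splitFam (hpart : ∀ P ∈ A, IsSetPartition P) (hA : TInter t A) (hij : i ≠ j) :
    TInter t (splitFam i j A) := by
  intro X hX Y hY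
  rcases mem_compression.mp hX with ⟨hX, hXs⟩ | ⟨P, hP, hPs, rfl⟩ <;>
    rcases mem_compression.mp hY with ⟨hY, hYs⟩ | ⟨Q, hQ, hQs, rfl⟩
  · exact hA X hX Y hY
  · exact Finset.inter_comm X _ ▸ le_card_splitP_inter hpart hA hij hQ hQs hX hXs
  · exact le_card_splitP_inter hpart hA hij hP hPs hY hYs
  · exact (hA P hP Q hQ).trans
      (card_inter_le_card_splitP_inter_splitP (hpart P hP) (hpart Q hQ))

end Family

theorem exists_compressed_family {n t : ℕ}
    (A : Set (Finset (Finset (Fin n))))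
    (hpart : ∀ P ∈ A, IsSetPartition P) (hA : TInter t A) :
    ∃ (L : List (Fin n × Fin n)),
      (∀ p ∈ L, p.1 ≠ p.2) ∧
      TInter t (L.foldl (fun F p => splitFam p.1 p.2 F) A) ∧
      (L.foldl (fun F p => splitFam p.1 p.2 F) A).ncard = A.ncard ∧
      ∀ i j : Fin n, i ≠ j →
        splitFam i j (L.foldl (fun F p => splitFam p.1 p.2 F) A) =
          L.foldl (fun F p => splitFam p.1 p.2 F) A := by
  obtain ⟨L, hL, ⟨-, hinter, hcard⟩, hfix⟩ := exists_foldl_fixed_of_measure_lt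
    (fun F (p : Fin n × Fin n) => splitFam p.1 p.2 F) (fun p => p.1 ≠ p.2)
    (fun F => (∀ P ∈ F, IsSetPartition P) ∧ TInter t F ∧ F.ncard = A.ncard)
    (fun F => ∑ᶠ P ∈ F, (n - P.card))
    (fun _ _ hp ⟨hpart, hF, hcard⟩ => ⟨forall_isSetPartition_splitFam hpart hp,
      hF.splitFam hpart hp, (ncard_splitFam hpart hp).trans hcard⟩)
    (fun _ _ hp hF hne => finsum_splitFam_lt hF.1 hp hne) A ⟨hpart, hA, rfl⟩
  exact ⟨L, hL, hinter, hcard, fun i j hij => hfix (i, j) hij⟩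
end
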